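/- arXiv:1904.09216 — 2 statements merged into one kernel-verified Lean document; each statement's English description precedes it below -/
import Mathlib

section
/- Let M be a matroid on ground set [n] with rank r and minimum circuit size c ≥ 3, and let x* belong to the matroid polytope P_M. Then there exist finitely many independent sets I₁, …, I_m of M and non-negative weights μ₁, …, μ_m with Σ_i μ_i ≤ 3 + 2r/(c−2), such that: (1) for every pair of distinct elements u, v ∈ [n], Σ_{i : {u,v} ⊆ I_i} μ_i ≥ x*(u)·x*(v), and (2) for every element v ∈ [n], Σ_{i : v ∈ I_i} μ_i ≥ x*(v). -/
open scoped BigOperators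

/-- The indicator (characteristic) vector `𝟙_S ∈ {0,1}^n` of a subset `S ⊆ [n]`. -/
def indicatorVec {n : ℕ} (S : Finset (Fin n)) : Fin n → ℝ := fun i => if i ∈ S then 1 else 0

/-- `Indep` is the independence predicate of a matroid on ground set `[n]`. -/
structure IsFinMatroid {n : ℕ} (Indep : Finset (Fin n) → Prop) : Prop where
  empty_indep : Indep ∅
  indep_of_subset : ∀ ⦃I J : Finset (Fin n)⦄, Indep J → I ⊆ J → Indep I
  exchange : ∀ ⦃I J : Finset (Fin n)⦄, Indep I → Indep J → I.card < J.card →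
    ∃ e ∈ J, e ∉ I ∧ Indep (insert e I)

/-- A circuit: a minimal dependent set (every proper subset is independent). -/
def IsCircuit {n : ℕ} (Indep : Finset (Fin n) → Prop) (C : Finset (Fin n)) : Prop :=
  ¬ Indep C ∧ ∀ D ⊂ C, Indep D

/-- The matroid polytope: convex hull of indicator vectors of independent sets. -/
def matroidPolytope {n : ℕ} (Indep : Finset (Fin n) → Prop) : Set (Fin n → ℝ) :=
  convexHull ℝ {x | ∃ S : Finset (Fin n), Indep S ∧ x = indicatorVec S}


section AuxiliaryLemmas

lemma nat_div_eq_iff {b p i : ℕ} (hb : 0 < b) : p / b = i ↔ i * b ≤ p ∧ p < i * b + b := by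
  constructor
  · rintro rfl
    refine ⟨Nat.div_mul_le_self p b, ?_⟩
    conv_lhs => rw [← Nat.div_add_mod p b]
    have := Nat.mod_lt p hb
    have h2 : b * (p / b) + p % b < b * (p / b) + b := by omega
    calc b * (p / b) + p % b < b * (p / b) + b := h2
    _ = p / b * b + b := by ring
  · rintro ⟨h1, h2⟩
    have hle : i ≤ p / b := by
      have := Nat.div_le_div_right (c := b) h1
      rwa [Nat.mul_div_cancel _ hb] at this
    have hlt : p / b < i + 1 := by
      rw [Nat.div_lt_iff_lt_mul hb]
      calc p < i * b + b := h2
      _ = (i + 1) * b := by ring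
    omega

lemma exists_chunks {n : ℕ} (x : Fin n → ℝ) (hx0 : ∀ v, 0 ≤ x v) (hx1 : ∀ v, x v ≤ 1)
    (b : ℕ) (hb : 0 < b) :
    ∃ (K : ℕ) (ci : Fin n → Fin K) (mx : Fin K → ℝ),
      (∀ i, 0 ≤ mx i) ∧ (∀ v, x v ≤ mx (ci v)) ∧
      (∀ i : Fin K, (Finset.univ.filter (fun v => ci v = i)).card ≤ b) ∧
      (∑ i, mx i) ≤ 1 + (∑ v, x v) / b := by
  classical
  set rel : Fin n → Fin n → Prop := fun u v => x v ≤ x u with hrel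
  haveI : DecidableRel rel := fun u v => Classical.dec _
  haveI htot : IsTotal (Fin n) rel := ⟨fun u v => le_total (x v) (x u)⟩
  haveI htrans : IsTrans (Fin n) rel := ⟨fun a b c h1 h2 => le_trans h2 h1⟩
  set L : List (Fin n) := List.insertionSort rel (List.finRange n) with hL
  have hLsorted : L.Pairwise rel := List.pairwise_insertionSort rel _
  have hLperm : L.Perm (List.finRange n) := List.perm_insertionSort rel _
  have hLlen : L.length = n := by rw [hLperm.length_eq, List.length_finRange]
  have hLnodup : L.Nodup := (hLperm.nodup_iff).2 (List.nodup_finRange n)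
  have hLmem : ∀ v : Fin n, v ∈ L := fun v => (hLperm.mem_iff).2 (List.mem_finRange v)
  set pos : Fin n → ℕ := fun v => L.idxOf v with hpos
  have hposlt : ∀ v, pos v < n := fun v => by
    rw [← hLlen]; exact List.idxOf_lt_length_iff.2 (hLmem v)
  have hget_pos : ∀ (v : Fin n) (h : pos v < L.length), L.get ⟨pos v, h⟩ = v := fun v h =>
    List.idxOf_get h
  have hpos_get : ∀ (p : ℕ) (h : p < L.length), pos (L.get ⟨p, h⟩) = p := fun p h => by
    simpa using List.get_idxOf hLnodup ⟨p, h⟩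
  have hposinj : ∀ u v : Fin n, pos u = pos v → u = v := by
    intro u v huv
    have h1 : pos u < L.length := by rw [hLlen]; exact hposlt u
    have h2 : pos v < L.length := by rw [hLlen]; exact hposlt v
    rw [← hget_pos u h1, ← hget_pos v h2]
    congr 1
    exact Fin.ext huv
  have hsorted : ∀ (p q : ℕ) (hp : p < L.length) (hq : q < L.length), p ≤ q →
      x (L.get ⟨q, hq⟩) ≤ x (L.get ⟨p, hp⟩) := by
    intro p q hp hq hpq
    rcases eq_or_lt_of_le hpq with h | h
    · subst h; exact le_refl _
    · exact hLsorted.rel_get_of_lt (show (⟨p, hp⟩ : Fin L.length) < ⟨q, hq⟩ from h)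
  set K : ℕ := n / b + 1 with hK
  have hciK : ∀ v : Fin n, pos v / b < K := fun v => by
    have : pos v / b ≤ n / b := Nat.div_le_div_right (le_of_lt (hposlt v))
    omega
  set mxN : ℕ → ℝ := fun i => if h : i * b < n then x (L.get ⟨i * b, by rwa [hLlen]⟩) else 0
    with hmxN
  set ci : Fin n → Fin K := fun v => ⟨pos v / b, hciK v⟩ with hci
  refine ⟨K, ci, fun i => mxN i.val, ?_, ?_, ?_, ?_⟩
  · -- nonneg
    intro i
    simp only [hmxN]
    split
    · exact hx0 _
    · exact le_refl 0
  · -- x v ≤ mx (ci v)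
    intro v
    have h1 : (pos v / b) * b ≤ pos v := Nat.div_mul_le_self _ _
    have h2 : (pos v / b) * b < n := lt_of_le_of_lt h1 (hposlt v)
    simp only [hmxN]
    rw [dif_pos h2]
    have hh := hsorted ((pos v / b) * b) (pos v) (by rwa [hLlen]) (by rw [hLlen]; exact hposlt v) h1
    rwa [hget_pos v _] at hh
  · -- card bound
    intro i
    have hsub : ∀ v ∈ Finset.univ.filter (fun v => ci v = i),
        pos v ∈ Finset.Ico (i.val * b) (i.val * b + b) := by
      intro v hv
      simp only [Finset.mem_filter, Finset.mem_univ, true_and, hci] at hv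
      have : pos v / b = i.val := by rw [← hv]
      rw [Finset.mem_Ico]
      exact (nat_div_eq_iff hb).1 this
    have hinj : Set.InjOn pos (Finset.univ.filter (fun v => ci v = i) : Finset (Fin n)) := by
      intro u _ v _ h
      exact hposinj u v h
    calc (Finset.univ.filter (fun v => ci v = i)).card
        ≤ (Finset.Ico (i.val * b) (i.val * b + b)).card :=
          Finset.card_le_card_of_injOn pos hsub hinj
    _ = b := by rw [Nat.card_Ico, Nat.add_sub_cancel_left]
  · -- sum bound
    have hrange : ∑ i : Fin K, mxN i.val = ∑ i ∈ Finset.range K, mxN i :=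
      Fin.sum_univ_eq_sum_range mxN K
    rw [hrange]
    have hsplit : Finset.range K = insert 0 (Finset.Ico 1 K) := by
      ext j
      simp only [Finset.mem_range, Finset.mem_insert, Finset.mem_Ico]
      constructor
      · intro hj
        rcases Nat.eq_zero_or_pos j with h | h
        · exact Or.inl h
        · exact Or.inr ⟨h, hj⟩
      · rintro (rfl | ⟨_, hj⟩)
        · rw [hK]; exact Nat.succ_pos _
        · exact hj
    rw [hsplit, Finset.sum_insert (by simp)]
    have h0 : mxN 0 ≤ 1 := by
      simp only [hmxN]
      split
      · exact hx1 _
      · exact zero_le_one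
    have key : ∀ i ∈ Finset.Ico 1 K, mxN i ≤
        (∑ v ∈ Finset.univ.filter (fun v => pos v / b = i - 1), x v) / b := by
      intro i hi
      rw [Finset.mem_Ico] at hi
      obtain ⟨i', rfl⟩ : ∃ i', i = i' + 1 := ⟨i - 1, by omega⟩
      by_cases h : (i' + 1) * b < n
      · have heach : ∀ v ∈ Finset.univ.filter (fun v => pos v / b = (i' + 1) - 1),
            mxN (i' + 1) ≤ x v := by
          intro v hv
          simp only [Finset.mem_filter, Finset.mem_univ, true_and, Nat.add_sub_cancel] at hv
          have hvlt : pos v < (i' + 1) * b := by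
            have := (nat_div_eq_iff hb).1 hv
            calc pos v < i' * b + b := this.2
            _ = (i' + 1) * b := by ring
          simp only [hmxN]
          rw [dif_pos h]
          have hh := hsorted (pos v) ((i' + 1) * b) (by rw [hLlen]; exact hposlt v)
            (by rwa [hLlen]) (le_of_lt hvlt)
          rwa [hget_pos v _] at hh
        have hcard : (Finset.univ.filter (fun v => pos v / b = (i' + 1) - 1)).card = b := by
          have hub : i' * b + b ≤ n := by
            have : (i' + 1) * b = i' * b + b := by ring
            omega
          rw [Finset.card_bij' (i := fun v _ => pos v)
            (j := fun p hp => L.get ⟨p, by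
              rw [hLlen]
              rw [Finset.mem_Ico] at hp
              omega⟩)
            (hi := ?_) (hj := ?_) (left_inv := ?_) (right_inv := ?_)
            (t := Finset.Ico (i' * b) (i' * b + b))]
          · rw [Nat.card_Ico]; omega
          · intro v hv
            simp only [Finset.mem_filter, Finset.mem_univ, true_and, Nat.add_sub_cancel] at hv
            rw [Finset.mem_Ico]
            exact (nat_div_eq_iff hb).1 hv
          · intro p hp
            rw [Finset.mem_Ico] at hp
            simp only [Finset.mem_filter, Finset.mem_univ, true_and, Nat.add_sub_cancel]
            rw [hpos_get]
            exact (nat_div_eq_iff hb).2 hp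
          · intro v hv
            exact hget_pos v _
          · intro p hp
            exact hpos_get p _
        have hs := Finset.card_nsmul_le_sum
          (Finset.univ.filter (fun v => pos v / b = (i' + 1) - 1)) x (mxN (i' + 1)) heach
        rw [hcard, nsmul_eq_mul] at hs
        rw [le_div_iff₀ (by positivity : (0:ℝ) < (b:ℝ))]
        linarith [hs]
      · simp only [hmxN]
        rw [dif_neg h]
        exact div_nonneg (Finset.sum_nonneg fun v _ => hx0 v) (by positivity)
    calc mxN 0 + ∑ i ∈ Finset.Ico 1 K, mxN i
        ≤ 1 + ∑ i ∈ Finset.Ico 1 K,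
            (∑ v ∈ Finset.univ.filter (fun v => pos v / b = i - 1), x v) / b :=
          add_le_add h0 (Finset.sum_le_sum key)
    _ = 1 + (∑ i ∈ Finset.Ico 1 K,
            ∑ v ∈ Finset.univ.filter (fun v => pos v / b = i - 1), x v) / b := by
          rw [Finset.sum_div]
    _ ≤ 1 + (∑ v, x v) / b := by
          have hdisj : (↑(Finset.Ico 1 K : Finset ℕ) : Set ℕ).PairwiseDisjoint
              (fun i => Finset.univ.filter (fun v => pos v / b = i - 1)) := by
            intro i hi j hj hij
            simp only [Finset.coe_Ico, Set.mem_Ico] at hi hj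
            refine Finset.disjoint_left.2 fun v hv1 hv2 => ?_
            simp only [Finset.mem_filter, Finset.mem_univ, true_and] at hv1 hv2
            exact hij (by omega)
          have hbu : ∑ i ∈ Finset.Ico 1 K,
              ∑ v ∈ Finset.univ.filter (fun v => pos v / b = i - 1), x v
              = ∑ v ∈ (Finset.Ico 1 K).biUnion
                  (fun i => Finset.univ.filter (fun v => pos v / b = i - 1)), x v :=
            (Finset.sum_biUnion hdisj).symm
          rw [hbu]
          have hle : ∑ v ∈ (Finset.Ico 1 K).biUnion
              (fun i => Finset.univ.filter (fun v => pos v / b = i - 1)), x v ≤ ∑ v, x v :=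
            Finset.sum_le_sum_of_subset_of_nonneg (Finset.subset_univ _)
              (fun v _ _ => hx0 v)
          have hbpos : (0:ℝ) < (b:ℝ) := by positivity
          gcongr

lemma indep_of_card_lt {n c : ℕ} {Indep : Finset (Fin n) → Prop}
    (hcmin : ∀ C, IsCircuit Indep C → c ≤ C.card)
    (A : Finset (Fin n)) : A.card < c → Indep A := by
  induction A using Finset.strongInduction with
  | _ A ih =>
    intro hA
    by_contra hdep
    have hc : IsCircuit Indep A :=
      ⟨hdep, fun D hD => ih D hD (lt_of_le_of_lt (Finset.card_le_card hD.subset) hA)⟩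
    have := hcmin A hc
    omega

lemma exists_max_ext {n : ℕ} {Indep : Finset (Fin n) → Prop} (hM : IsFinMatroid Indep)
    (X B : Finset (Fin n)) (hB : Indep B) (hBX : B ⊆ X) :
    ∃ W, B ⊆ W ∧ W ⊆ X ∧ Indep W ∧ ∀ J, Indep J → J ⊆ X → J.card ≤ W.card := by
  classical
  have hne : (X.powerset.filter (fun W => B ⊆ W ∧ Indep W)).Nonempty :=
    ⟨B, by simp [Finset.mem_powerset, hBX, hB]⟩
  obtain ⟨W, hWmem, hWmax⟩ := Finset.exists_max_image _ Finset.card hne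
  simp only [Finset.mem_filter, Finset.mem_powerset] at hWmem
  obtain ⟨hWX, hBW, hWind⟩ := hWmem
  refine ⟨W, hBW, hWX, hWind, fun J hJ hJX => ?_⟩
  by_contra hlt
  push_neg at hlt
  obtain ⟨e, heJ, heW, hins⟩ := hM.exchange hWind hJ hlt
  have hmem : insert e W ∈ X.powerset.filter (fun W => B ⊆ W ∧ Indep W) := by
    simp only [Finset.mem_filter, Finset.mem_powerset]
    exact ⟨Finset.insert_subset (hJX heJ) hWX, hBW.trans (Finset.subset_insert _ _), hins⟩
  have := hWmax _ hmem
  rw [Finset.card_insert_of_notMem heW] at this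
  omega

lemma twin_sets {n c b : ℕ} {Indep : Finset (Fin n) → Prop} (hM : IsFinMatroid Indep)
    (hcmin : ∀ C, IsCircuit Indep C → c ≤ C.card) (hb : 2 * b < c)
    (S C : Finset (Fin n)) (hS : Indep S) (hC : C.card ≤ b) :
    ∃ W₁ W₂ : Finset (Fin n), Indep W₁ ∧ Indep W₂ ∧ C ⊆ W₁ ∧ C ⊆ W₂ ∧
      ∀ u ∈ S, u ∈ W₁ ∨ u ∈ W₂ := by
  have hCind : Indep C := indep_of_card_lt hcmin C (by omega)
  obtain ⟨W₁, hCW₁, hW₁X, hW₁ind, hW₁max⟩ :=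
    exists_max_ext hM (S ∪ C) C hCind Finset.subset_union_right
  have hcardW₁ : S.card ≤ W₁.card := hW₁max S hS Finset.subset_union_left
  set R := (S ∪ C) \ W₁ with hRdef
  have hRcard : R.card ≤ C.card := by
    have h1 : R.card = (S ∪ C).card - W₁.card := Finset.card_sdiff_of_subset hW₁X
    have h2 : (S ∪ C).card ≤ S.card + C.card := Finset.card_union_le S C
    omega
  have hCRind : Indep (C ∪ R) := by
    refine indep_of_card_lt hcmin _ ?_
    have := Finset.card_union_le C R
    omega
  have hCRX : C ∪ R ⊆ S ∪ C :=
    Finset.union_subset Finset.subset_union_right (Finset.sdiff_subset)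
  obtain ⟨W₂, hCW₂, hW₂X, hW₂ind, _⟩ := exists_max_ext hM (S ∪ C) (C ∪ R) hCRind hCRX
  refine ⟨W₁, W₂, hW₁ind, hW₂ind, hCW₁, Finset.subset_union_left.trans hCW₂, fun u hu => ?_⟩
  by_cases h : u ∈ W₁
  · exact Or.inl h
  · exact Or.inr (hCW₂ (Finset.mem_union_right _ (Finset.mem_sdiff.2 ⟨Finset.mem_union_left _ hu, h⟩)))

end AuxiliaryLemmas

/-- Theorem `quadcovround`: existence of a small quadratic coverage.
Let `M` be a matroid on `[n]` with rank `r` and minimum circuit size `c ≥ 3`, and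
`x*` a point of its matroid polytope.  Then there is a weighted family of
independent sets `(I_i, μ_i)` with `Σ μ_i ≤ 3 + 2r/(c-2)` such that
(1) `Σ_{i : {u,v} ⊆ I_i} μ_i ≥ x*(u)·x*(v)` for all pairs `u ≠ v`, and
(2) `Σ_{i : v ∈ I_i} μ_i ≥ x*(v)` for every `v`. -/
theorem stmt11 {n : ℕ} (Indep : Finset (Fin n) → Prop) (hM : IsFinMatroid Indep)
    (r c : ℕ)
    (hrank : (∃ I, Indep I ∧ I.card = r) ∧ ∀ I, Indep I → I.card ≤ r)
    (hc : 3 ≤ c)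
    (hcirc : ∃ C, IsCircuit Indep C ∧ C.card = c)
    (hcmin : ∀ C, IsCircuit Indep C → c ≤ C.card)
    (xstar : Fin n → ℝ) (hx : xstar ∈ matroidPolytope Indep) :
    ∃ (m : ℕ) (I : Fin m → Finset (Fin n)) (μ : Fin m → ℝ),
      (∀ i, Indep (I i)) ∧ (∀ i, 0 ≤ μ i) ∧
      (∑ i, μ i) ≤ 3 + 2 * (r : ℝ) / ((c : ℝ) - 2) ∧
      (∀ u v : Fin n, u ≠ v →
        xstar u * xstar v ≤ ∑ i ∈ Finset.univ.filter (fun i => u ∈ I i ∧ v ∈ I i), μ i) ∧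
      (∀ v : Fin n, xstar v ≤ ∑ i ∈ Finset.univ.filter (fun i => v ∈ I i), μ i) := by
  classical
  rw [matroidPolytope, convexHull_eq] at hx
  obtain ⟨ι, t, w, z, hw0, hw1, hz, hcm⟩ := hx
  have hSex : ∀ j : {j // j ∈ t}, ∃ Sf : Finset (Fin n), Indep Sf ∧ z j.val = indicatorVec Sf :=
    fun j => hz j.val j.2
  choose S hSind hSz using hSex
  have hw0' : ∀ j : {j // j ∈ t}, 0 ≤ w j.val := fun j => hw0 j.val j.2
  have hw1' : ∑ j ∈ t.attach, w j.val = 1 := by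
    rw [Finset.sum_attach]; exact hw1
  have hmarg : ∀ v, xstar v = ∑ j ∈ t.attach, w j.val * (if v ∈ S j then (1:ℝ) else 0) := by
    intro v
    have h1 : t.centerMass w z = xstar := hcm
    rw [Finset.centerMass_eq_of_sum_1 _ _ hw1] at h1
    calc xstar v = (∑ j ∈ t, w j • z j) v := by rw [h1]
    _ = ∑ j ∈ t, (w j • z j) v := Finset.sum_apply _ _ _
    _ = ∑ j ∈ t.attach, (w j.val • z j.val) v := (Finset.sum_attach _ _).symm
    _ = ∑ j ∈ t.attach, w j.val * (if v ∈ S j then (1:ℝ) else 0) := by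
        refine Finset.sum_congr rfl fun j _ => ?_
        rw [Pi.smul_apply, smul_eq_mul, hSz j]
        rfl
  have hx0 : ∀ v, 0 ≤ xstar v := by
    intro v
    rw [hmarg v]
    refine Finset.sum_nonneg fun j _ => mul_nonneg (hw0' j) ?_
    split <;> norm_num
  have hx1 : ∀ v, xstar v ≤ 1 := by
    intro v
    have hle : xstar v ≤ ∑ j ∈ t.attach, w j.val := by
      rw [hmarg v]
      refine Finset.sum_le_sum fun j _ => ?_
      have := hw0' j
      split <;> linarith
    rw [hw1'] at hle
    exact hle
  have hXr : (∑ v, xstar v) ≤ (r : ℝ) := by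
    calc ∑ v, xstar v = ∑ v, ∑ j ∈ t.attach, w j.val * (if v ∈ S j then (1:ℝ) else 0) :=
          Finset.sum_congr rfl fun v _ => hmarg v
    _ = ∑ j ∈ t.attach, ∑ v, w j.val * (if v ∈ S j then (1:ℝ) else 0) := Finset.sum_comm
    _ = ∑ j ∈ t.attach, w j.val * ((S j).card : ℝ) := by
        refine Finset.sum_congr rfl fun j _ => ?_
        rw [← Finset.mul_sum]
        congr 1
        rw [Finset.sum_boole]
        simp
    _ ≤ ∑ j ∈ t.attach, w j.val * (r : ℝ) := by
        refine Finset.sum_le_sum fun j _ => ?_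
        refine mul_le_mul_of_nonneg_left ?_ (hw0' j)
        exact_mod_cast hrank.2 _ (hSind j)
    _ = r := by rw [← Finset.sum_mul, hw1', one_mul]
  have hX0 : (0:ℝ) ≤ ∑ v, xstar v := Finset.sum_nonneg fun v _ => hx0 v
  -- chunk parameters
  set b : ℕ := (c - 1) / 2 with hbdef
  have hb0 : 0 < b := by omega
  have hb2c : 2 * b < c := by omega
  have hcb : (c : ℝ) - 2 ≤ 2 * (b : ℝ) := by
    have h1 : c ≤ 2 * b + 2 := by omega
    have h2 : (c:ℝ) ≤ 2 * (b:ℝ) + 2 := by exact_mod_cast h1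
    linarith
  have hc2 : (0:ℝ) < (c:ℝ) - 2 := by
    have : (3:ℝ) ≤ (c:ℝ) := by exact_mod_cast hc
    linarith
  obtain ⟨K, ci, mx, hmx0, hmxci, hcard, hmxsum⟩ := exists_chunks xstar hx0 hx1 b hb0
  set Ci : Fin K → Finset (Fin n) := fun i => Finset.univ.filter (fun v => ci v = i) with hCidef
  have hvCi : ∀ v, v ∈ Ci (ci v) := fun v => by simp [hCidef]
  have htwin : ∀ (j : {j // j ∈ t}) (i : Fin K), ∃ W₁ W₂ : Finset (Fin n),
      Indep W₁ ∧ Indep W₂ ∧ Ci i ⊆ W₁ ∧ Ci i ⊆ W₂ ∧ ∀ u ∈ S j, u ∈ W₁ ∨ u ∈ W₂ :=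
    fun j i => twin_sets hM hcmin hb2c (S j) (Ci i) (hSind j) (hcard i)
  choose W₁ W₂ hW₁ind hW₂ind hCiW₁ hCiW₂ hWcov using htwin
  -- the family
  set σt : Type := {j // j ∈ t} ⊕ ({j // j ∈ t} × Fin K × Bool) with hσt
  set Iset : σt → Finset (Fin n) :=
    Sum.elim (fun j => S j) (fun p => if p.2.2 then W₁ p.1 p.2.1 else W₂ p.1 p.2.1) with hIset
  set μ0 : σt → ℝ :=
    Sum.elim (fun j => w j.val) (fun p => w p.1.val * (mx p.2.1 / 2)) with hμ0def
  have hμ0 : ∀ a, 0 ≤ μ0 a := by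
    rintro (j | ⟨j, i, s⟩)
    · exact hw0' j
    · exact mul_nonneg (hw0' j) (by
        have := hmx0 i
        positivity)
  set e : σt ≃ Fin (Fintype.card σt) := Fintype.equivFin σt with he
  refine ⟨Fintype.card σt, fun i => Iset (e.symm i), fun i => μ0 (e.symm i), ?_, ?_, ?_, ?_, ?_⟩
  · -- independence
    intro i
    show Indep (Iset (e.symm i))
    obtain j | ⟨j, ii, s⟩ := e.symm i
    · simpa [hIset] using hSind j
    · rcases s with _ | _
      · simpa [hIset] using hW₂ind j ii
      · simpa [hIset] using hW₁ind j ii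
  · -- nonneg
    intro i
    exact hμ0 _
  · -- total mass
    have htr : ∑ i, μ0 (e.symm i) = ∑ a, μ0 a := Equiv.sum_comp e.symm μ0
    rw [htr, Fintype.sum_sum_type]
    have hA : ∑ j : {j // j ∈ t}, μ0 (Sum.inl j) = 1 := by
      simp only [hμ0def, Sum.elim_inl]
      rw [Finset.univ_eq_attach, hw1']
    have hB : ∑ p : {j // j ∈ t} × Fin K × Bool, μ0 (Sum.inr p) = ∑ i, mx i := by
      rw [Fintype.sum_prod_type]
      have hinner : ∀ j : {j // j ∈ t},
          ∑ q : Fin K × Bool, μ0 (Sum.inr (j, q)) = w j.val * ∑ i, mx i := by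
        intro j
        rw [Fintype.sum_prod_type]
        have : ∀ ii : Fin K, ∑ s : Bool, μ0 (Sum.inr (j, ii, s)) = w j.val * mx ii := by
          intro ii
          rw [Fintype.sum_bool]
          simp only [hμ0def, Sum.elim_inr]
          ring
        rw [Finset.sum_congr rfl (fun ii _ => this ii), ← Finset.mul_sum]
      rw [Finset.sum_congr rfl (fun j _ => hinner j), ← Finset.sum_mul,
        Finset.univ_eq_attach, hw1', one_mul]
    rw [hA, hB]
    have hdiv : (∑ v, xstar v) / (b:ℝ) ≤ 2 * (r:ℝ) / ((c:ℝ) - 2) := by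
      rw [div_le_div_iff₀ (by positivity) hc2]
      have hr0 : (0:ℝ) ≤ (r:ℝ) := by positivity
      nlinarith [hXr, hcb, hX0]
    linarith [hmxsum]
  · -- pair coverage
    intro u v huv
    rw [Finset.sum_filter]
    have htr : ∑ i, (if u ∈ Iset (e.symm i) ∧ v ∈ Iset (e.symm i) then μ0 (e.symm i) else 0)
        = ∑ a, (if u ∈ Iset a ∧ v ∈ Iset a then μ0 a else 0) :=
      Equiv.sum_comp e.symm (fun a => if u ∈ Iset a ∧ v ∈ Iset a then μ0 a else 0)
    rw [htr]
    have hinl : (0:ℝ) ≤ ∑ j : {j // j ∈ t},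
        (if u ∈ Iset (Sum.inl j) ∧ v ∈ Iset (Sum.inl j) then μ0 (Sum.inl j) else 0) := by
      refine Finset.sum_nonneg fun j _ => ?_
      split
      · exact hμ0 _
      · exact le_refl 0
    set G : {j // j ∈ t} → Fin K → ℝ := fun j ii => ∑ s : Bool,
      (if u ∈ Iset (Sum.inr (j, ii, s)) ∧ v ∈ Iset (Sum.inr (j, ii, s))
        then μ0 (Sum.inr (j, ii, s)) else 0) with hGdef
    have hGnonneg : ∀ (j : {j // j ∈ t}) (ii : Fin K), (0:ℝ) ≤ G j ii := by
      intro j ii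
      refine Finset.sum_nonneg fun s _ => ?_
      split
      · exact hμ0 _
      · exact le_refl 0
    -- per-j bound via the chunk of v
    have hj1 : ∀ j : {j // j ∈ t},
        (if u ∈ S j then w j.val * (mx (ci v) / 2) else 0) ≤ G j (ci v) := by
      intro j
      simp only [hGdef]
      rw [Fintype.sum_bool]
      by_cases hu : u ∈ S j
      · rw [if_pos hu]
        have hv1 : v ∈ W₁ j (ci v) := hCiW₁ _ _ (hvCi v)
        have hv2 : v ∈ W₂ j (ci v) := hCiW₂ _ _ (hvCi v)
        rcases hWcov j (ci v) u hu with h1 | h2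
        · have htrue : (if u ∈ Iset (Sum.inr (j, ci v, true)) ∧ v ∈ Iset (Sum.inr (j, ci v, true))
              then μ0 (Sum.inr (j, ci v, true)) else 0) = w j.val * (mx (ci v) / 2) := by
            simp [hIset, hμ0def, h1, hv1]
          have hf : (0:ℝ) ≤ (if u ∈ Iset (Sum.inr (j, ci v, false)) ∧ v ∈ Iset (Sum.inr (j, ci v, false))
              then μ0 (Sum.inr (j, ci v, false)) else 0) := by
            split
            · exact hμ0 _
            · exact le_refl 0
          linarith
        · have hfalse : (if u ∈ Iset (Sum.inr (j, ci v, false)) ∧ v ∈ Iset (Sum.inr (j, ci v, false))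
              then μ0 (Sum.inr (j, ci v, false)) else 0) = w j.val * (mx (ci v) / 2) := by
            simp [hIset, hμ0def, h2, hv2]
          have hf : (0:ℝ) ≤ (if u ∈ Iset (Sum.inr (j, ci v, true)) ∧ v ∈ Iset (Sum.inr (j, ci v, true))
              then μ0 (Sum.inr (j, ci v, true)) else 0) := by
            split
            · exact hμ0 _
            · exact le_refl 0
          linarith
      · rw [if_neg hu]
        have hf1 : (0:ℝ) ≤ (if u ∈ Iset (Sum.inr (j, ci v, true)) ∧ v ∈ Iset (Sum.inr (j, ci v, true))
            then μ0 (Sum.inr (j, ci v, true)) else 0) := by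
          split
          · exact hμ0 _
          · exact le_refl 0
        have hf2 : (0:ℝ) ≤ (if u ∈ Iset (Sum.inr (j, ci v, false)) ∧ v ∈ Iset (Sum.inr (j, ci v, false))
            then μ0 (Sum.inr (j, ci v, false)) else 0) := by
          split
          · exact hμ0 _
          · exact le_refl 0
        linarith
    -- per-j bound via the chunk of u
    have hj2 : ∀ j : {j // j ∈ t},
        (if v ∈ S j then w j.val * (mx (ci u) / 2) else 0) ≤ G j (ci u) := by
      intro j
      simp only [hGdef]
      rw [Fintype.sum_bool]
      by_cases hv : v ∈ S j
      · rw [if_pos hv]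
        have hu1 : u ∈ W₁ j (ci u) := hCiW₁ _ _ (hvCi u)
        have hu2 : u ∈ W₂ j (ci u) := hCiW₂ _ _ (hvCi u)
        rcases hWcov j (ci u) v hv with h1 | h2
        · have htrue : (if u ∈ Iset (Sum.inr (j, ci u, true)) ∧ v ∈ Iset (Sum.inr (j, ci u, true))
              then μ0 (Sum.inr (j, ci u, true)) else 0) = w j.val * (mx (ci u) / 2) := by
            simp [hIset, hμ0def, h1, hu1]
          have hf : (0:ℝ) ≤ (if u ∈ Iset (Sum.inr (j, ci u, false)) ∧ v ∈ Iset (Sum.inr (j, ci u, false))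
              then μ0 (Sum.inr (j, ci u, false)) else 0) := by
            split
            · exact hμ0 _
            · exact le_refl 0
          linarith
        · have hfalse : (if u ∈ Iset (Sum.inr (j, ci u, false)) ∧ v ∈ Iset (Sum.inr (j, ci u, false))
              then μ0 (Sum.inr (j, ci u, false)) else 0) = w j.val * (mx (ci u) / 2) := by
            simp [hIset, hμ0def, h2, hu2]
          have hf : (0:ℝ) ≤ (if u ∈ Iset (Sum.inr (j, ci u, true)) ∧ v ∈ Iset (Sum.inr (j, ci u, true))
              then μ0 (Sum.inr (j, ci u, true)) else 0) := by
            split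
            · exact hμ0 _
            · exact le_refl 0
          linarith
      · rw [if_neg hv]
        have hf1 : (0:ℝ) ≤ (if u ∈ Iset (Sum.inr (j, ci u, true)) ∧ v ∈ Iset (Sum.inr (j, ci u, true))
            then μ0 (Sum.inr (j, ci u, true)) else 0) := by
          split
          · exact hμ0 _
          · exact le_refl 0
        have hf2 : (0:ℝ) ≤ (if u ∈ Iset (Sum.inr (j, ci u, false)) ∧ v ∈ Iset (Sum.inr (j, ci u, false))
            then μ0 (Sum.inr (j, ci u, false)) else 0) := by
          split
          · exact hμ0 _
          · exact le_refl 0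
        linarith
    -- sums of the per-j bounds
    have hsum1 : ∑ j : {j // j ∈ t}, (if u ∈ S j then w j.val * (mx (ci v) / 2) else 0)
        = (mx (ci v) / 2) * xstar u := by
      rw [hmarg u, Finset.univ_eq_attach, Finset.mul_sum]
      refine Finset.sum_congr rfl fun j _ => ?_
      split <;> ring
    have hsum2 : ∑ j : {j // j ∈ t}, (if v ∈ S j then w j.val * (mx (ci u) / 2) else 0)
        = (mx (ci u) / 2) * xstar v := by
      rw [hmarg v, Finset.univ_eq_attach, Finset.mul_sum]
      refine Finset.sum_congr rfl fun j _ => ?_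
      split <;> ring
    have hmain : xstar u * xstar v ≤
        ∑ p : {j // j ∈ t} × Fin K × Bool,
          (if u ∈ Iset (Sum.inr p) ∧ v ∈ Iset (Sum.inr p) then μ0 (Sum.inr p) else 0) := by
      have hexp : ∑ p : {j // j ∈ t} × Fin K × Bool,
          (if u ∈ Iset (Sum.inr p) ∧ v ∈ Iset (Sum.inr p) then μ0 (Sum.inr p) else 0)
          = ∑ j : {j // j ∈ t}, ∑ ii : Fin K, G j ii := by
        rw [Fintype.sum_prod_type]
        exact Finset.sum_congr rfl fun j _ => by rw [Fintype.sum_prod_type]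
      rw [hexp]
      by_cases hcc : ci u = ci v
      · -- same chunk
        have hjj : ∀ j : {j // j ∈ t}, w j.val * mx (ci v) ≤ G j (ci v) := by
          intro j
          have huCi : u ∈ Ci (ci v) := by rw [← hcc]; exact hvCi u
          have hu1 : u ∈ W₁ j (ci v) := hCiW₁ _ _ huCi
          have hu2 : u ∈ W₂ j (ci v) := hCiW₂ _ _ huCi
          have hv1 : v ∈ W₁ j (ci v) := hCiW₁ _ _ (hvCi v)
          have hv2 : v ∈ W₂ j (ci v) := hCiW₂ _ _ (hvCi v)
          simp only [hGdef]
          rw [Fintype.sum_bool]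
          have ht' : (if u ∈ Iset (Sum.inr (j, ci v, true)) ∧ v ∈ Iset (Sum.inr (j, ci v, true))
              then μ0 (Sum.inr (j, ci v, true)) else 0) = w j.val * (mx (ci v) / 2) := by
            simp [hIset, hμ0def, hu1, hv1]
          have hf' : (if u ∈ Iset (Sum.inr (j, ci v, false)) ∧ v ∈ Iset (Sum.inr (j, ci v, false))
              then μ0 (Sum.inr (j, ci v, false)) else 0) = w j.val * (mx (ci v) / 2) := by
            simp [hIset, hμ0def, hu2, hv2]
          rw [ht', hf']
          ring_nf
          exact le_refl _
        have hstep : ∑ j : {j // j ∈ t}, w j.val * mx (ci v)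
            ≤ ∑ j : {j // j ∈ t}, ∑ ii : Fin K, G j ii := by
          refine Finset.sum_le_sum fun j _ => ?_
          calc w j.val * mx (ci v) ≤ G j (ci v) := hjj j
          _ ≤ ∑ ii : Fin K, G j ii :=
            Finset.single_le_sum (fun ii _ => hGnonneg j ii) (Finset.mem_univ _)
        have hval : ∑ j : {j // j ∈ t}, w j.val * mx (ci v) = mx (ci v) := by
          rw [← Finset.sum_mul, Finset.univ_eq_attach, hw1', one_mul]
        have hxx : xstar u * xstar v ≤ mx (ci v) := by
          have h1 : xstar u * xstar v ≤ 1 * xstar v :=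
            mul_le_mul_of_nonneg_right (hx1 u) (hx0 v)
          have h2 : xstar v ≤ mx (ci v) := hmxci v
          linarith
        linarith [hstep, hval, hxx]
      · -- different chunks
        have hstep : ∀ j : {j // j ∈ t}, G j (ci u) + G j (ci v) ≤ ∑ ii : Fin K, G j ii := by
          intro j
          have hpair : ({ci u, ci v} : Finset (Fin K)).sum (G j) = G j (ci u) + G j (ci v) :=
            Finset.sum_pair hcc
          calc G j (ci u) + G j (ci v) = ({ci u, ci v} : Finset (Fin K)).sum (G j) := hpair.symm
          _ ≤ ∑ ii : Fin K, G j ii :=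
            Finset.sum_le_sum_of_subset_of_nonneg (Finset.subset_univ _)
              (fun ii _ _ => hGnonneg j ii)
        have htot : ∑ j : {j // j ∈ t}, (G j (ci u) + G j (ci v))
            ≤ ∑ j : {j // j ∈ t}, ∑ ii : Fin K, G j ii :=
          Finset.sum_le_sum fun j _ => hstep j
        have hsplit : ∑ j : {j // j ∈ t}, (G j (ci u) + G j (ci v))
            = (∑ j : {j // j ∈ t}, G j (ci u)) + (∑ j : {j // j ∈ t}, G j (ci v)) :=
          Finset.sum_add_distrib
        have hb1 : (mx (ci u) / 2) * xstar v ≤ ∑ j : {j // j ∈ t}, G j (ci u) := by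
          rw [← hsum2]
          exact Finset.sum_le_sum fun j _ => hj2 j
        have hb2 : (mx (ci v) / 2) * xstar u ≤ ∑ j : {j // j ∈ t}, G j (ci v) := by
          rw [← hsum1]
          exact Finset.sum_le_sum fun j _ => hj1 j
        have hfin : xstar u * xstar v ≤ (mx (ci u) / 2) * xstar v + (mx (ci v) / 2) * xstar u := by
          have h1 : xstar u ≤ mx (ci u) := hmxci u
          have h2 : xstar v ≤ mx (ci v) := hmxci v
          nlinarith [hx0 u, hx0 v]
        linarith [htot, hsplit, hb1, hb2, hfin]
    calc xstar u * xstar v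
        ≤ ∑ p : {j // j ∈ t} × Fin K × Bool,
            (if u ∈ Iset (Sum.inr p) ∧ v ∈ Iset (Sum.inr p) then μ0 (Sum.inr p) else 0) := hmain
    _ ≤ (∑ j : {j // j ∈ t}, (if u ∈ Iset (Sum.inl j) ∧ v ∈ Iset (Sum.inl j) then μ0 (Sum.inl j) else 0))
          + ∑ p : {j // j ∈ t} × Fin K × Bool,
            (if u ∈ Iset (Sum.inr p) ∧ v ∈ Iset (Sum.inr p) then μ0 (Sum.inr p) else 0) := by
        linarith
    _ = ∑ a, (if u ∈ Iset a ∧ v ∈ Iset a then μ0 a else 0) :=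
        (Fintype.sum_sum_type (f := fun a : σt => if u ∈ Iset a ∧ v ∈ Iset a then μ0 a else 0)).symm
  · -- marginal coverage
    intro v
    rw [Finset.sum_filter]
    have htr : ∑ i, (if v ∈ Iset (e.symm i) then μ0 (e.symm i) else 0)
        = ∑ a, (if v ∈ Iset a then μ0 a else 0) :=
      Equiv.sum_comp e.symm (fun a => if v ∈ Iset a then μ0 a else 0)
    rw [htr, Fintype.sum_sum_type]
    have hinr : (0:ℝ) ≤ ∑ p : {j // j ∈ t} × Fin K × Bool,
        (if v ∈ Iset (Sum.inr p) then μ0 (Sum.inr p) else 0) := by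
      refine Finset.sum_nonneg fun p _ => ?_
      split
      · exact hμ0 _
      · exact le_refl 0
    have hinl : ∑ j : {j // j ∈ t},
        (if v ∈ Iset (Sum.inl j) then μ0 (Sum.inl j) else 0) = xstar v := by
      rw [hmarg v, Finset.univ_eq_attach]
      refine Finset.sum_congr rfl fun j _ => ?_
      simp only [hIset, Sum.elim_inl, hμ0def]
      split <;> simp
    linarith
end

section
/- Let F(x) = (1/2)xᵀAx + bᵀx where A ∈ ℝ^{n×n} is a symmetric entrywise non-negative matrix with zero diagonal and b ∈ ℝ^n is entrywise non-negative. Let M be a matroid on [n] with rank r and minimum circuit size c ≥ 3. Then for every x* in the matroid polytope P_M there exists an independent set I of M such that (3 + 2r/(c−2))·F(𝟙_I) ≥ F(x*). -/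
open scoped BigOperators

/-- The quadratic multilinear function `F(x) = (1/2)·xᵀAx + bᵀx`. -/
noncomputable def quadFun {n : ℕ} (A : Matrix (Fin n) (Fin n) ℝ) (b : Fin n → ℝ)
    (x : Fin n → ℝ) : ℝ :=
  (1 / 2 : ℝ) * (∑ i, ∑ j, x i * A i j * x j) + ∑ i, b i * x i

namespace Stmt12Aux

variable {n : ℕ}

/-- Cross sum of matrix entries between two finsets. -/
def cS (A : Matrix (Fin n) (Fin n) ℝ) (X Y : Finset (Fin n)) : ℝ :=
  ∑ i ∈ X, ∑ j ∈ Y, A i j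

lemma cS_nonneg (A : Matrix (Fin n) (Fin n) ℝ) (hA : ∀ i j, 0 ≤ A i j) (X Y : Finset (Fin n)) :
    0 ≤ cS A X Y :=
  Finset.sum_nonneg fun i _ => Finset.sum_nonneg fun j _ => hA i j

lemma cS_union_left (A : Matrix (Fin n) (Fin n) ℝ) {X X' : Finset (Fin n)} (Y : Finset (Fin n))
    (h : Disjoint X X') : cS A (X ∪ X') Y = cS A X Y + cS A X' Y :=
  Finset.sum_union h

lemma cS_union_right (A : Matrix (Fin n) (Fin n) ℝ) (X : Finset (Fin n)) {Y Y' : Finset (Fin n)}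
    (h : Disjoint Y Y') : cS A X (Y ∪ Y') = cS A X Y + cS A X Y' := by
  unfold cS
  rw [← Finset.sum_add_distrib]
  exact Finset.sum_congr rfl fun i _ => Finset.sum_union h

lemma cS_symm (A : Matrix (Fin n) (Fin n) ℝ) (hsymm : ∀ i j, A i j = A j i)
    (X Y : Finset (Fin n)) : cS A X Y = cS A Y X := by
  unfold cS
  refine Finset.sum_comm.trans ?_
  exact Finset.sum_congr rfl fun j _ => Finset.sum_congr rfl fun i _ => hsymm i j

lemma cS_mono (A : Matrix (Fin n) (Fin n) ℝ) (hA : ∀ i j, 0 ≤ A i j)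
    {X X' Y Y' : Finset (Fin n)} (hX : X ⊆ X') (hY : Y ⊆ Y') : cS A X Y ≤ cS A X' Y' := by
  refine le_trans (Finset.sum_le_sum fun i _ =>
    Finset.sum_le_sum_of_subset_of_nonneg hY fun j _ _ => hA i j) ?_
  exact Finset.sum_le_sum_of_subset_of_nonneg hX fun i _ _ =>
    Finset.sum_nonneg fun j _ => hA i j

lemma quadFun_indicator (A : Matrix (Fin n) (Fin n) ℝ) (b : Fin n → ℝ) (S : Finset (Fin n)) :
    quadFun A b (indicatorVec S) = (1 / 2 : ℝ) * cS A S S + ∑ i ∈ S, b i := by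
  unfold quadFun indicatorVec cS
  congr 1
  · congr 1
    have h1 : ∀ i j : Fin n,
        (if i ∈ S then (1:ℝ) else 0) * A i j * (if j ∈ S then (1:ℝ) else 0)
        = if i ∈ S then (if j ∈ S then A i j else 0) else 0 := by
      intro i j; split_ifs <;> ring
    simp_rw [h1]
    have h2 : ∀ i : Fin n,
        (∑ j, if i ∈ S then (if j ∈ S then A i j else 0) else 0)
        = if i ∈ S then (∑ j ∈ S, A i j) else 0 := by
      intro i
      by_cases h : i ∈ S
      · simp only [h, if_true]
        rw [Finset.sum_ite_mem, Finset.univ_inter]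
      · simp [h]
    simp_rw [h2]
    rw [Finset.sum_ite_mem, Finset.univ_inter]
  · have h3 : ∀ i : Fin n, b i * (if i ∈ S then (1:ℝ) else 0) = if i ∈ S then b i else 0 := by
      intro i; split_ifs <;> ring
    simp_rw [h3]
    rw [Finset.sum_ite_mem, Finset.univ_inter]

lemma bsum_le_quadFun (A : Matrix (Fin n) (Fin n) ℝ) (hA : ∀ i j, 0 ≤ A i j)
    (b : Fin n → ℝ) (S : Finset (Fin n)) :
    ∑ i ∈ S, b i ≤ quadFun A b (indicatorVec S) := by
  rw [quadFun_indicator]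
  have := cS_nonneg A hA S S
  linarith

lemma halfquad_le_quadFun (A : Matrix (Fin n) (Fin n) ℝ)
    (b : Fin n → ℝ) (hb : ∀ i, 0 ≤ b i) (S : Finset (Fin n)) :
    (1 / 2 : ℝ) * cS A S S ≤ quadFun A b (indicatorVec S) := by
  rw [quadFun_indicator]
  have : (0:ℝ) ≤ ∑ i ∈ S, b i := Finset.sum_nonneg fun i _ => hb i
  linarith

lemma cS_le_quadFun (A : Matrix (Fin n) (Fin n) ℝ) (hsymm : ∀ i j, A i j = A j i)
    (hA : ∀ i j, 0 ≤ A i j) (b : Fin n → ℝ) (hb : ∀ i, 0 ≤ b i)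
    {X Y B : Finset (Fin n)} (hdisj : Disjoint X Y) (hsub : X ∪ Y ⊆ B) :
    cS A X Y ≤ quadFun A b (indicatorVec B) := by
  have h1 : cS A (X ∪ Y) (X ∪ Y) = cS A X (X ∪ Y) + cS A Y (X ∪ Y) :=
    cS_union_left A _ hdisj
  have h2 : cS A X (X ∪ Y) = cS A X X + cS A X Y := cS_union_right A _ hdisj
  have h3 : cS A Y (X ∪ Y) = cS A Y X + cS A Y Y := cS_union_right A _ hdisj
  have h4 : cS A Y X = cS A X Y := cS_symm A hsymm Y X
  have h5 : cS A (X ∪ Y) (X ∪ Y) ≤ cS A B B := cS_mono A hA hsub hsub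
  have h6 : 0 ≤ cS A X X := cS_nonneg A hA X X
  have h7 : 0 ≤ cS A Y Y := cS_nonneg A hA Y Y
  have h8 := halfquad_le_quadFun A b hb B
  linarith

lemma small_indep {Indep : Finset (Fin n) → Prop} (_hM : IsFinMatroid Indep) {c : ℕ}
    (hcmin : ∀ C, IsCircuit Indep C → c ≤ C.card)
    (D : Finset (Fin n)) (hD : D.card < c) : Indep D := by
  classical
  by_contra hdep
  obtain ⟨C, hC, hCmin⟩ := Finset.exists_min_image
    (D.powerset.filter fun C => ¬ Indep C) Finset.card ⟨D, by simp [hdep]⟩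
  simp only [Finset.mem_filter, Finset.mem_powerset] at hC
  have hcircC : IsCircuit Indep C := by
    refine ⟨hC.2, fun D' hD' => ?_⟩
    by_contra hdep'
    have hmem : D' ∈ D.powerset.filter fun C => ¬ Indep C := by
      simp only [Finset.mem_filter, Finset.mem_powerset]
      exact ⟨hD'.subset.trans hC.1, hdep'⟩
    have h1 := hCmin D' hmem
    have h2 := Finset.card_lt_card hD'
    omega
  have h3 := hcmin C hcircC
  have h4 := Finset.card_le_card hC.1
  omega

lemma exists_base_ext {Indep : Finset (Fin n) → Prop} (hM : IsFinMatroid Indep)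
    (X G : Finset (Fin n)) (hX : Indep X) (hG : Indep G) :
    ∃ B, Indep B ∧ G ⊆ B ∧ B ⊆ X ∪ G ∧ X.card ≤ B.card := by
  classical
  obtain ⟨B, hB, hBmax⟩ := Finset.exists_max_image
    ((X ∪ G).powerset.filter fun B => G ⊆ B ∧ Indep B) Finset.card
    ⟨G, Finset.mem_filter.mpr ⟨Finset.mem_powerset.mpr Finset.subset_union_right,
      Finset.Subset.refl G, hG⟩⟩
  simp only [Finset.mem_filter, Finset.mem_powerset] at hB
  refine ⟨B, hB.2.2, hB.2.1, hB.1, ?_⟩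
  by_contra hlt
  push_neg at hlt
  obtain ⟨e, heX, heB, hins⟩ := hM.exchange hB.2.2 hX hlt
  have hmem : insert e B ∈ (X ∪ G).powerset.filter fun B => G ⊆ B ∧ Indep B := by
    simp only [Finset.mem_filter, Finset.mem_powerset]
    refine ⟨Finset.insert_subset (Finset.mem_union_left _ heX) hB.1,
      hB.2.1.trans (Finset.subset_insert _ _), hins⟩
  have := hBmax _ hmem
  rw [Finset.card_insert_of_notMem heB] at this
  omega

lemma block_bound (A : Matrix (Fin n) (Fin n) ℝ) (hsymm : ∀ i j, A i j = A j i)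
    (hA : ∀ i j, 0 ≤ A i j) (b : Fin n → ℝ) (hb : ∀ i, 0 ≤ b i)
    {Indep : Finset (Fin n) → Prop} (hM : IsFinMatroid Indep) {c : ℕ}
    (hcmin : ∀ C, IsCircuit Indep C → c ≤ C.card)
    {Fm : ℝ} (hFm : ∀ S, Indep S → quadFun A b (indicatorVec S) ≤ Fm)
    (X G : Finset (Fin n)) (hX : Indep X) (hG : Indep G) (hdisj : Disjoint X G)
    (hcard : 2 * G.card < c) :
    cS A X G ≤ 2 * Fm := by
  classical
  obtain ⟨B, hB, hGB, hBsub, hcardB⟩ := exists_base_ext hM X G hX hG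
  set X' := B ∩ X with hX'def
  have hX'X : X' ⊆ X := Finset.inter_subset_right
  have hdisjX'G : Disjoint X' G := hdisj.mono_left hX'X
  have hBeq : B = X' ∪ G := by
    apply Finset.Subset.antisymm
    · intro x hx
      rcases Finset.mem_union.mp (hBsub hx) with h | h
      · exact Finset.mem_union_left _ (Finset.mem_inter.mpr ⟨hx, h⟩)
      · exact Finset.mem_union_right _ h
    · exact Finset.union_subset Finset.inter_subset_left hGB
  have hcardX' : X.card ≤ X'.card + G.card := by
    have hBc : B.card = X'.card + G.card := by
      rw [hBeq, Finset.card_union_of_disjoint hdisjX'G]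
    omega
  have hXsplit : X' ∪ (X \ X') = X := Finset.union_sdiff_of_subset hX'X
  have hsplit : cS A X G = cS A X' G + cS A (X \ X') G := by
    have h := cS_union_left A G (Finset.disjoint_sdiff : Disjoint X' (X \ X'))
    rw [hXsplit] at h
    exact h
  have h1 : cS A X' G ≤ Fm := by
    refine le_trans (cS_le_quadFun A hsymm hA b hb hdisjX'G ?_) (hFm B hB)
    rw [hBeq]
  have hsd : (X \ X').card ≤ G.card := by
    rw [Finset.card_sdiff_of_subset hX'X]
    have := Finset.card_le_card hX'X
    omega
  have hDcard : ((X \ X') ∪ G).card < c := by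
    have := Finset.card_union_le (X \ X') G
    omega
  have hDindep : Indep ((X \ X') ∪ G) := small_indep hM hcmin _ hDcard
  have h2 : cS A (X \ X') G ≤ Fm :=
    le_trans (cS_le_quadFun A hsymm hA b hb (hdisj.mono_left Finset.sdiff_subset)
      (Finset.Subset.refl _)) (hFm _ hDindep)
  linarith

lemma cross_bound (A : Matrix (Fin n) (Fin n) ℝ) (hsymm : ∀ i j, A i j = A j i)
    (hA : ∀ i j, 0 ≤ A i j) (b : Fin n → ℝ) (hb : ∀ i, 0 ≤ b i)
    {Indep : Finset (Fin n) → Prop} (hM : IsFinMatroid Indep) {c : ℕ} (hc : 3 ≤ c)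
    (hcmin : ∀ C, IsCircuit Indep C → c ≤ C.card)
    {Fm : ℝ} (hFm : ∀ S, Indep S → quadFun A b (indicatorVec S) ≤ Fm) (hFm0 : 0 ≤ Fm) :
    ∀ N : ℕ, ∀ X Y : Finset (Fin n), Y.card ≤ N → Indep X → Indep Y → Disjoint X Y →
      cS A X Y ≤ (2 + 4 * (Y.card : ℝ) / ((c : ℝ) - 2)) * Fm := by
  have hc2 : (0:ℝ) < (c:ℝ) - 2 := by
    have : (3:ℝ) ≤ (c:ℝ) := by exact_mod_cast hc
    linarith
  set m : ℕ := (c - 1) / 2 with hm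
  have hm1 : 1 ≤ m := by omega
  have h2m : 2 * m ≤ c - 1 := by omega
  intro N
  induction N with
  | zero =>
    intro X Y hYN _ _ _
    have hY0 : Y = ∅ := Finset.card_eq_zero.mp (Nat.le_zero.mp hYN)
    subst hY0
    have hz : cS A X ∅ = 0 := by simp [cS]
    rw [hz]
    have : (0:ℝ) ≤ 4 * ((∅:Finset (Fin n)).card : ℝ) / ((c:ℝ) - 2) := by positivity
    nlinarith
  | succ N ih =>
    intro X Y hYN hX hY hdisj
    by_cases hsmall : Y.card ≤ m
    · have hblk := block_bound A hsymm hA b hb hM hcmin hFm X Y hX hY hdisj (by omega)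
      have hpos : (0:ℝ) ≤ 4 * (Y.card : ℝ) / ((c:ℝ) - 2) := by positivity
      nlinarith
    · push_neg at hsmall
      obtain ⟨G, hGY, hGcard⟩ := Finset.exists_subset_card_eq (le_of_lt hsmall)
      have hGindep := hM.indep_of_subset hY hGY
      have hdisjXG : Disjoint X G := hdisj.mono_right hGY
      have hYsplit : G ∪ (Y \ G) = Y := Finset.union_sdiff_of_subset hGY
      have hsplit : cS A X Y = cS A X G + cS A X (Y \ G) := by
        have h := cS_union_right A X (Finset.disjoint_sdiff : Disjoint G (Y \ G))
        rw [hYsplit] at h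
        exact h
      have h1 : cS A X G ≤ 2 * Fm :=
        block_bound A hsymm hA b hb hM hcmin hFm X G hX hGindep hdisjXG (by omega)
      have hYG_indep := hM.indep_of_subset hY (Finset.sdiff_subset (s := Y) (t := G))
      have hdisj2 : Disjoint X (Y \ G) := hdisj.mono_right Finset.sdiff_subset
      have hcard2 : (Y \ G).card ≤ N := by
        rw [Finset.card_sdiff_of_subset hGY]
        omega
      have h2 := ih X (Y \ G) hcard2 hX hYG_indep hdisj2
      have hYc : ((Y \ G).card : ℝ) = (Y.card : ℝ) - (m : ℝ) := by
        rw [Finset.card_sdiff_of_subset hGY, hGcard]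
        have hmY : m ≤ Y.card := le_of_lt hsmall
        push_cast [hmY]
        ring
      rw [hYc] at h2
      rw [hsplit]
      have hmc : (c:ℝ) - 2 ≤ 2 * (m:ℝ) := by
        have h' : c ≤ 2 * m + 2 := by omega
        have h'' : (c:ℝ) ≤ 2 * (m:ℝ) + 2 := by exact_mod_cast h'
        linarith
      have key : 2 ≤ 4 * (m:ℝ) / ((c:ℝ) - 2) := by
        rw [le_div_iff₀ hc2]
        linarith
      have expand : 4 * ((Y.card:ℝ) - (m:ℝ)) / ((c:ℝ) - 2)
          = 4 * (Y.card:ℝ) / ((c:ℝ) - 2) - 4 * (m:ℝ) / ((c:ℝ) - 2) := by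
        field_simp
      rw [expand] at h2
      nlinarith [h1, h2, hFm0, key]

lemma exists_ge_of_convex {ι : Type} (t : Finset ι) (w v : ι → ℝ) (hw : ∀ i ∈ t, 0 ≤ w i)
    (h1 : ∑ i ∈ t, w i = 1) (a : ℝ) (ha : a = ∑ i ∈ t, w i * v i) :
    ∃ i ∈ t, a ≤ v i := by
  by_contra hcon
  push_neg at hcon
  have hex : ∃ i ∈ t, 0 < w i := by
    by_contra hall
    push_neg at hall
    have hz : ∑ i ∈ t, w i = 0 :=
      Finset.sum_eq_zero fun i hi => le_antisymm (hall i hi) (hw i hi)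
    rw [hz] at h1
    norm_num at h1
  obtain ⟨i0, hi0, hwi0⟩ := hex
  have hlt : ∑ i ∈ t, w i * v i < ∑ i ∈ t, w i * a := by
    apply Finset.sum_lt_sum
    · intro i hi
      rcases (hw i hi).lt_or_eq with h | h
      · exact mul_le_mul_of_nonneg_left (le_of_lt (hcon i hi)) (le_of_lt h)
      · rw [← h]; simp
    · exact ⟨i0, hi0, mul_lt_mul_of_pos_left (hcon i0 hi0) hwi0⟩
  rw [← Finset.sum_mul, h1, one_mul, ← ha] at hlt
  linarith

lemma linsum_decomp {ι : Type} (t : Finset ι) (w : ι → ℝ) (z : ι → Fin n → ℝ)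
    (coef : Fin n → ℝ) :
    (∑ j, coef j * (∑ k ∈ t, w k • z k) j) = ∑ k ∈ t, w k * ∑ j, coef j * z k j := by
  simp_rw [Finset.sum_apply, Pi.smul_apply, smul_eq_mul, Finset.mul_sum]
  rw [Finset.sum_comm]
  refine Finset.sum_congr rfl fun k _ => Finset.sum_congr rfl fun j _ => by ring

lemma linsum_indicator (coef : Fin n → ℝ) (S : Finset (Fin n)) :
    (∑ j, coef j * indicatorVec S j) = ∑ j ∈ S, coef j := by
  unfold indicatorVec
  have h : ∀ j : Fin n, coef j * (if j ∈ S then (1:ℝ) else 0) = if j ∈ S then coef j else 0 := by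
    intro j; split_ifs <;> ring
  simp_rw [h]
  rw [Finset.sum_ite_mem, Finset.univ_inter]

end Stmt12Aux

open Stmt12Aux in
/-- Theorem `IGap`: rounding gap for non-negative quadratics over a
matroid.  Let `F(x) = (1/2)xᵀAx + bᵀx` with `A` symmetric, entrywise non-negative,
zero diagonal and `b ≥ 0`, and let `M` be a matroid on `[n]` with rank `r` and
minimum circuit size `c ≥ 3`.  Then for every `x*` in the matroid polytope there is
an independent set `I` with `(3 + 2r/(c-2))·F(𝟙_I) ≥ F(x*)`. -/
theorem stmt12 {n : ℕ} (A : Matrix (Fin n) (Fin n) ℝ)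
    (hsymm : ∀ i j, A i j = A j i) (hAnn : ∀ i j, 0 ≤ A i j)
    (hdiag : ∀ i, A i i = 0)
    (b : Fin n → ℝ) (hb : ∀ i, 0 ≤ b i)
    (Indep : Finset (Fin n) → Prop) (hM : IsFinMatroid Indep)
    (r c : ℕ)
    (hrank : (∃ I, Indep I ∧ I.card = r) ∧ ∀ I, Indep I → I.card ≤ r)
    (hc : 3 ≤ c)
    (hcirc : ∃ C, IsCircuit Indep C ∧ C.card = c)
    (hcmin : ∀ C, IsCircuit Indep C → c ≤ C.card)
    (xstar : Fin n → ℝ) (hx : xstar ∈ matroidPolytope Indep) :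
    ∃ I, Indep I ∧
      quadFun A b xstar ≤ (3 + 2 * (r : ℝ) / ((c : ℝ) - 2)) * quadFun A b (indicatorVec I) := by
  classical
  have hc2 : (0:ℝ) < (c:ℝ) - 2 := by
    have : (3:ℝ) ≤ (c:ℝ) := by exact_mod_cast hc
    linarith
  -- the maximizing independent set
  obtain ⟨Im, hImem, hImax⟩ := Finset.exists_max_image
    ((Finset.univ : Finset (Finset (Fin n))).filter fun S => Indep S)
    (fun S => quadFun A b (indicatorVec S))
    ⟨∅, Finset.mem_filter.mpr ⟨Finset.mem_univ _, hM.empty_indep⟩⟩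
  have hIm : Indep Im := (Finset.mem_filter.mp hImem).2
  set Fm := quadFun A b (indicatorVec Im) with hFmdef
  have hFm : ∀ S, Indep S → quadFun A b (indicatorVec S) ≤ Fm := fun S hS =>
    hImax S (Finset.mem_filter.mpr ⟨Finset.mem_univ _, hS⟩)
  have hFm0 : 0 ≤ Fm := by
    have hempty : quadFun A b (indicatorVec (∅ : Finset (Fin n))) = 0 := by
      rw [quadFun_indicator]
      simp [cS]
    have := hFm ∅ hM.empty_indep
    linarith
  refine ⟨Im, hIm, ?_⟩
  -- decompose xstar as a convex combination
  rw [matroidPolytope, convexHull_eq] at hx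
  obtain ⟨ι, t, w, z, hw0, hw1, hz, hxeq⟩ := hx
  rw [Finset.centerMass_eq_of_sum_1 _ _ hw1] at hxeq
  -- linear part
  have hlin : (∑ i, b i * xstar i) ≤ Fm := by
    have hcalc : (∑ i, b i * xstar i) = ∑ k ∈ t, w k * ∑ j, b j * z k j := by
      rw [← hxeq]
      exact linsum_decomp t w z b
    obtain ⟨k, hk, hle⟩ := exists_ge_of_convex t w _ hw0 hw1 _ hcalc
    obtain ⟨S, hS, hzS⟩ := hz k hk
    rw [hzS, linsum_indicator] at hle
    exact le_trans hle (le_trans (bsum_le_quadFun A hAnn b S) (hFm S hS))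
  -- quadratic part
  set coef1 : Fin n → ℝ := fun i => ∑ j, A i j * xstar j with hcoef1
  set T := ∑ i, ∑ j, xstar i * A i j * xstar j with hTdef
  have hT1 : T = ∑ i, coef1 i * xstar i := by
    rw [hTdef, hcoef1]
    refine Finset.sum_congr rfl fun i _ => ?_
    rw [Finset.sum_mul]
    exact Finset.sum_congr rfl fun j _ => by ring
  have hcalc2 : T = ∑ k ∈ t, w k * ∑ i, coef1 i * z k i := by
    rw [hT1, ← hxeq]
    exact linsum_decomp t w z coef1
  obtain ⟨kI, hkI, hleI⟩ := exists_ge_of_convex t w _ hw0 hw1 T hcalc2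
  obtain ⟨I, hI, hzI⟩ := hz kI hkI
  rw [hzI, linsum_indicator] at hleI
  -- hleI : T ≤ ∑ i ∈ I, coef1 i
  set coef2 : Fin n → ℝ := fun j => ∑ i ∈ I, A i j with hcoef2
  have hswap : (∑ i ∈ I, coef1 i) = ∑ j, coef2 j * xstar j := by
    rw [hcoef1, hcoef2]
    rw [Finset.sum_comm]
    exact Finset.sum_congr rfl fun j _ => (Finset.sum_mul ..).symm
  have hcalc3 : (∑ j, coef2 j * xstar j) = ∑ k ∈ t, w k * ∑ j, coef2 j * z k j := by
    rw [← hxeq]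
    exact linsum_decomp t w z coef2
  obtain ⟨kJ, hkJ, hleJ⟩ := exists_ge_of_convex t w _ hw0 hw1 _ hcalc3
  obtain ⟨J, hJ, hzJ⟩ := hz kJ hkJ
  rw [hzJ, linsum_indicator] at hleJ
  have hJc : (∑ j ∈ J, coef2 j) = cS A I J := by
    rw [hcoef2]
    exact Finset.sum_comm
  have hTIJ : T ≤ cS A I J := by
    rw [← hJc]
    calc T ≤ ∑ i ∈ I, coef1 i := hleI
    _ = ∑ j, coef2 j * xstar j := hswap
    _ ≤ ∑ j ∈ J, coef2 j := hleJ
  -- decompose cS A I J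
  set Xs := I \ J with hXsdef
  set Ys := J \ I with hYsdef
  set Q := I ∩ J with hQdef
  have hQ' : J ∩ I = Q := by rw [hQdef, Finset.inter_comm]
  have hIdecomp : Xs ∪ Q = I := Finset.sdiff_union_inter I J
  have hJdecomp : Ys ∪ Q = J := by
    rw [← hQ']
    exact Finset.sdiff_union_inter J I
  have hdXQ : Disjoint Xs Q := Finset.disjoint_sdiff_inter I J
  have hdYQ : Disjoint Ys Q := by
    rw [← hQ']
    exact Finset.disjoint_sdiff_inter J I
  have hIJdec : cS A I J = cS A Xs Ys + cS A Xs Q + cS A Q Ys + cS A Q Q := by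
    have e1 : cS A I J = cS A Xs J + cS A Q J := by
      have h := cS_union_left A J hdXQ
      rw [hIdecomp] at h
      exact h
    have e2 : cS A Xs J = cS A Xs Ys + cS A Xs Q := by
      have h := cS_union_right A Xs hdYQ
      rw [hJdecomp] at h
      exact h
    have e3 : cS A Q J = cS A Q Ys + cS A Q Q := by
      have h := cS_union_right A Q hdYQ
      rw [hJdecomp] at h
      exact h
    rw [e1, e2, e3]
    ring
  have hkey1 : cS A Xs Q + (1/2 : ℝ) * cS A Q Q ≤ Fm := by
    have hII : cS A I I = cS A Xs Xs + cS A Xs Q + cS A Q Xs + cS A Q Q := by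
      have e1 : cS A I I = cS A Xs I + cS A Q I := by
        have h := cS_union_left A I hdXQ
        rw [hIdecomp] at h
        exact h
      have e2 : cS A Xs I = cS A Xs Xs + cS A Xs Q := by
        have h := cS_union_right A Xs hdXQ
        rw [hIdecomp] at h
        exact h
      have e3 : cS A Q I = cS A Q Xs + cS A Q Q := by
        have h := cS_union_right A Q hdXQ
        rw [hIdecomp] at h
        exact h
      rw [e1, e2, e3]
      ring
    have hs : cS A Q Xs = cS A Xs Q := cS_symm A hsymm Q Xs
    have h0 : 0 ≤ cS A Xs Xs := cS_nonneg A hAnn Xs Xs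
    have hFI := le_trans (halfquad_le_quadFun A b hb I) (hFm I hI)
    rw [hII, hs] at hFI
    linarith
  have hkey2 : cS A Q Ys + (1/2 : ℝ) * cS A Q Q ≤ Fm := by
    have hJJ : cS A J J = cS A Ys Ys + cS A Ys Q + cS A Q Ys + cS A Q Q := by
      have e1 : cS A J J = cS A Ys J + cS A Q J := by
        have h := cS_union_left A J hdYQ
        rw [hJdecomp] at h
        exact h
      have e2 : cS A Ys J = cS A Ys Ys + cS A Ys Q := by
        have h := cS_union_right A Ys hdYQ
        rw [hJdecomp] at h
        exact h
      have e3 : cS A Q J = cS A Q Ys + cS A Q Q := by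
        have h := cS_union_right A Q hdYQ
        rw [hJdecomp] at h
        exact h
      rw [e1, e2, e3]
      ring
    have hs : cS A Ys Q = cS A Q Ys := cS_symm A hsymm Ys Q
    have h0 : 0 ≤ cS A Ys Ys := cS_nonneg A hAnn Ys Ys
    have hFJ := le_trans (halfquad_le_quadFun A b hb J) (hFm J hJ)
    rw [hJJ, hs] at hFJ
    linarith
  -- cross bound
  have hXsI : Indep Xs := hM.indep_of_subset hI Finset.sdiff_subset
  have hYsI : Indep Ys := hM.indep_of_subset hJ Finset.sdiff_subset
  have hdisjXY : Disjoint Xs Ys := disjoint_sdiff_sdiff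
  have hYcard : Ys.card ≤ r :=
    le_trans (Finset.card_le_card Finset.sdiff_subset) (hrank.2 J hJ)
  have hcb := cross_bound A hsymm hAnn b hb hM hc hcmin hFm hFm0 Ys.card Xs Ys le_rfl
    hXsI hYsI hdisjXY
  have hcross : cS A Xs Ys ≤ (2 + 4 * (r:ℝ) / ((c:ℝ) - 2)) * Fm := by
    refine le_trans hcb ?_
    have hcast : ((Ys.card):ℝ) ≤ (r:ℝ) := by exact_mod_cast hYcard
    have hm : 4 * ((Ys.card):ℝ) / ((c:ℝ) - 2) ≤ 4 * (r:ℝ) / ((c:ℝ) - 2) := by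
      gcongr
    nlinarith
  have hQQ0 : 0 ≤ cS A Q Q := cS_nonneg A hAnn Q Q
  have hTfin : T ≤ (2 + 4 * (r:ℝ) / ((c:ℝ) - 2)) * Fm + 2 * Fm := by
    have : cS A I J ≤ cS A Xs Ys + 2 * Fm := by linarith
    linarith
  -- final assembly
  rw [quadFun]
  rw [← hTdef]
  have hrhs : (3 + 2 * (r:ℝ) / ((c:ℝ) - 2)) * Fm
      = (1/2 : ℝ) * ((2 + 4 * (r:ℝ) / ((c:ℝ) - 2)) * Fm + 2 * Fm) + Fm := by
    field_simp
    ring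
  rw [← hFmdef, hrhs]
  linarith
end
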